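/- arXiv:1702.04121 — 2 statements merged into one kernel-verified Lean document; each statement's English description precedes it below -/
import Mathlib

section
/- Let n be a positive integer, let x, z, y ∈ ℝⁿ, and let A be a real n×n matrix with zᵀAx ≠ 0. Define ŷ = (Ax)/(zᵀAx) and f(A) = (1/2)‖y − (Ax)/(zᵀAx)‖₂². Then f is differentiable at A with respect to the entries of A, and the gradient matrix of f at A equals ((z xᵀ Aᵀ − (zᵀAx) I)/(zᵀAx)²) (y − ŷ) xᵀ, where I is the n×n identity matrix. -/
/-!
Write `f = φ ∘ g` with `g M = (zᵀMx)⁻¹ • Mx` and `φ u = ½‖y - u‖²`. With `c = zᵀAx`, the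
quotient rule gives `g'(H) = c⁻¹ • Hx - (zᵀHx / c²) • Ax` and the chain rule
`f'(H) = -(y - ŷ)ᵀ g'(H)`. The `(i, j)` entry of the gradient is `f'(E_ij)`, where
`E_ij x = x_j e_i`; writing `c⁻¹ = c / c²` turns it into the `(i, j)` entry of the stated matrix.
-/

open Matrix

attribute [local instance] Matrix.normedAddCommGroup Matrix.normedSpace

theorem HasFDerivAt.inv_smul {𝕜 E F : Type*} [NontriviallyNormedField 𝕜]
    [NormedAddCommGroup E] [NormedSpace 𝕜 E] [NormedAddCommGroup F] [NormedSpace 𝕜 F]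
    {c : E → 𝕜} {f : E → F} {c' : E →L[𝕜] 𝕜} {f' : E →L[𝕜] F} {p : E}
    (hc : HasFDerivAt c c' p) (hf : HasFDerivAt f f' p) (hp : c p ≠ 0) :
    HasFDerivAt (fun q => (c q)⁻¹ • f q)
      ((c p)⁻¹ • f' - ((c p) ^ 2)⁻¹ • c'.smulRight (f p)) p :=
  (((hasFDerivAt_inv hp).comp p hc).fun_smul hf).congr_fderiv <| by
    ext H
    simp [sub_eq_add_neg, smul_smul, mul_comm]

namespace Matrix

variable {m n 𝕜 : Type*} [Fintype m] [Fintype n] [NontriviallyNormedField 𝕜] [CompleteSpace 𝕜]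

def mulVecLeftCLM (x : n → 𝕜) : Matrix m n 𝕜 →L[𝕜] m → 𝕜 :=
  LinearMap.toContinuousLinearMap
    { toFun := fun M => M *ᵥ x
      map_add' := fun M N => add_mulVec M N x
      map_smul' := fun c M => smul_mulVec c M x }

def dotProductCLM (z : m → 𝕜) : (m → 𝕜) →L[𝕜] 𝕜 :=
  LinearMap.toContinuousLinearMap (dotProductBilin 𝕜 𝕜 z)

@[simp]
theorem dotProductCLM_apply (z v : m → 𝕜) : dotProductCLM z v = z ⬝ᵥ v := rfl

theorem hasFDerivAt_inv_dotProduct_mulVec_smul_mulVec {z : m → 𝕜} {x : n → 𝕜}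
    {A : Matrix m n 𝕜} (h : z ⬝ᵥ A *ᵥ x ≠ 0) :
    HasFDerivAt (fun M : Matrix m n 𝕜 => (z ⬝ᵥ M *ᵥ x)⁻¹ • M *ᵥ x)
      ((z ⬝ᵥ A *ᵥ x)⁻¹ • mulVecLeftCLM x - ((z ⬝ᵥ A *ᵥ x) ^ 2)⁻¹ •
        ((dotProductCLM z).comp (mulVecLeftCLM x)).smulRight (A *ᵥ x)) A :=
  ((dotProductCLM z).comp (mulVecLeftCLM x)).hasFDerivAt.inv_smul
    (mulVecLeftCLM x).hasFDerivAt h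

end Matrix

theorem hasFDerivAt_half_sum_sq_sub {ι : Type*} [Fintype ι] (y u : ι → ℝ) :
    HasFDerivAt (fun v : ι → ℝ => 1 / 2 * ∑ k, (y k - v k) ^ 2) (-dotProductCLM (y - u)) u := by
  have hk (k : ι) : HasFDerivAt (fun v : ι → ℝ => (y k - v k) ^ 2)
      (-((2 * (y k - u k)) • ContinuousLinearMap.proj (R := ℝ) (φ := fun _ : ι => ℝ) k)) u := by
    simpa using ((hasFDerivAt_apply (𝕜 := ℝ) k u).const_sub (y k)).pow 2
  refine ((HasFDerivAt.fun_sum fun k _ => hk k).const_mul (1 / 2 : ℝ)).congr_fderiv ?_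
  ext v
  simp [dotProduct, Finset.mul_sum, ← mul_assoc]

theorem Matrix.vecMulVec_smul_sub_mulVec_apply {ι K : Type*} [Fintype ι] [DecidableEq ι] [Field K]
    (x z r : ι → K) (A : Matrix ι ι K) {c : K} (hc : c ≠ 0) (i j : ι) :
    vecMulVec (((c ^ 2)⁻¹ • (vecMulVec z x * Aᵀ - c • 1)) *ᵥ r) x i j =
      -(r ⬝ᵥ (c⁻¹ • single i j 1 *ᵥ x - (c ^ 2)⁻¹ • (z ⬝ᵥ single i j 1 *ᵥ x) • A *ᵥ x)) := by
  rw [vecMulVec_apply, smul_mulVec, sub_mulVec, ← mulVec_mulVec, smul_mulVec, one_mulVec]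
  simp only [mulVec_transpose, vecMulVec_mulVec, dotProduct_comm x, op_smul_eq_smul,
    Pi.smul_apply, Pi.sub_apply, smul_eq_mul, single_mulVec_eq, one_mul, dotProduct_smul,
    dotProduct_single, mul_one, dotProduct_sub, dotProduct_mulVec, neg_sub]
  field_simp

theorem one_step_inference_gradient_appendix_general (n : ℕ)
    (x z y : Fin n → ℝ)
    (A : Matrix (Fin n) (Fin n) ℝ)
    (h : z ⬝ᵥ A.mulVec x ≠ 0)
    (yhat : Fin n → ℝ) (hy : yhat = (z ⬝ᵥ A.mulVec x)⁻¹ • A.mulVec x)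
    (G : Matrix (Fin n) (Fin n) ℝ)
    (hG : G = vecMulVec
      ((((z ⬝ᵥ A.mulVec x) ^ 2)⁻¹ •
        (vecMulVec z x * Aᵀ -
          (z ⬝ᵥ A.mulVec x) • (1 : Matrix (Fin n) (Fin n) ℝ))).mulVec
        (y - yhat)) x) :
    DifferentiableAt ℝ
      (fun M : Matrix (Fin n) (Fin n) ℝ =>
        (1 / 2) * ∑ k, (y k - ((z ⬝ᵥ M.mulVec x)⁻¹ • M.mulVec x) k) ^ 2) A ∧
    ∀ i j, HasDerivAt
      (fun t : ℝ =>
        (1 / 2) * ∑ k, (y k -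
          ((z ⬝ᵥ (A + t • single i j (1 : ℝ)).mulVec x)⁻¹ •
            (A + t • single i j (1 : ℝ)).mulVec x) k) ^ 2)
      (G i j) 0 := by
  have hf := (hasFDerivAt_half_sum_sq_sub y _).comp A
    (hasFDerivAt_inv_dotProduct_mulVec_smul_mulVec h)
  subst hG hy
  exact ⟨hf.differentiableAt, fun i j => (hf.hasLineDerivAt (single i j 1)).congr_deriv
    (vecMulVec_smul_sub_mulVec_apply x z _ A h i j).symm⟩

/-- Lemma 1 (Appendix A form): the one-step inference gradient of the PSR
squared prediction loss `f(A) = (1/2) ‖y − (Ax)/(zᵀAx)‖²` is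
`((z xᵀ Aᵀ − (zᵀAx) I)/(zᵀAx)²) (y − ŷ) xᵀ`. -/
theorem one_step_inference_gradient_appendix (n : ℕ) (hn : 0 < n)
    (x z y : Fin n → ℝ)
    (A : Matrix (Fin n) (Fin n) ℝ)
    (h : z ⬝ᵥ A.mulVec x ≠ 0)
    (yhat : Fin n → ℝ) (hy : yhat = (z ⬝ᵥ A.mulVec x)⁻¹ • A.mulVec x)
    (G : Matrix (Fin n) (Fin n) ℝ)
    (hG : G = vecMulVec
      ((((z ⬝ᵥ A.mulVec x) ^ 2)⁻¹ •
        (vecMulVec z x * Aᵀ -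
          (z ⬝ᵥ A.mulVec x) • (1 : Matrix (Fin n) (Fin n) ℝ))).mulVec
        (y - yhat)) x) :
    DifferentiableAt ℝ
      (fun M : Matrix (Fin n) (Fin n) ℝ =>
        (1 / 2) * ∑ k, (y k - ((z ⬝ᵥ M.mulVec x)⁻¹ • M.mulVec x) k) ^ 2) A ∧
    ∀ i j, HasDerivAt
      (fun t : ℝ =>
        (1 / 2) * ∑ k, (y k -
          ((z ⬝ᵥ (A + t • single i j (1 : ℝ)).mulVec x)⁻¹ •
            (A + t • single i j (1 : ℝ)).mulVec x) k) ^ 2)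
      (G i j) 0 :=
  one_step_inference_gradient_appendix_general n x z y A h yhat hy G hG
end

section
/- Let n, h be positive integers, let x, z, y ∈ ℝⁿ, and let B₁, B₂, ..., B_h be real n×n matrices. Define states recursively by q̂₁ = x and q̂_{s+1} = (B_s q̂_s)/(zᵀ B_s q̂_s) for 1 ≤ s ≤ h, and suppose zᵀ B_s q̂_s ≠ 0 for every 1 ≤ s ≤ h. Let C = B_h B_{h−1} ⋯ B₂ (with C = I when h = 1). Then the function g(A) = (1/2)‖y − (C A x)/(zᵀ C A x)‖₂², which is well defined near A = B₁ since zᵀ C B₁ x ≠ 0, is differentiable at A = B₁, and its gradient matrix at B₁ equals Cᵀ ((z q̂_{h+1}ᵀ − I)/(zᵀ C B₁ x)) (y − q̂_{h+1}) xᵀ, where I is the n×n identity matrix and q̂_{h+1} = (C B₁ x)/(zᵀ C B₁ x). -/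
/-!
Each update multiplies the state by an operator and then by a scalar, so `q̂_{h+1}` is a scalar
multiple of `B_h ⋯ B₁ x = C B₁ x`; as `zᵀ q̂_{h+1} = 1`, the scalar is `(zᵀ C B₁ x)⁻¹`, and in
particular `zᵀ C B₁ x ≠ 0`. The loss is `v ↦ ½ ‖y - v / (zᵀ v)‖²` composed with the linear map
`A ↦ C A x`. Along a curve through `v` with velocity `w` the former has derivative
`⟨(zᵀ v)⁻¹ (z q̂ᵀ - I) (y - q̂), w⟩`, and for `w = C E_ij x` this pairing is the `(i, j)` entry
of `Cᵀ (zᵀ v)⁻¹ (z q̂ᵀ - I) (y - q̂) xᵀ`.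
-/

open Matrix

attribute [local instance] Matrix.normedAddCommGroup Matrix.normedSpace

section DescendingProduct

variable {M : Type*} [Monoid M]

/-- `descProd B s = B s * B (s - 1) * ⋯ * B 1`. -/
def descProd (B : ℕ → M) (s : ℕ) : M :=
  ((List.range s).map fun t => B (s - t)).prod

theorem descProd_zero (B : ℕ → M) : descProd B 0 = 1 := rfl

theorem descProd_succ (B : ℕ → M) (s : ℕ) : descProd B (s + 1) = B (s + 1) * descProd B s := by
  simp only [descProd, List.range_succ_eq_map, List.map_cons, List.map_map, List.prod_cons]
  congr 2
  exact List.map_congr_left fun t _ => by simp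

theorem descProd_eq_prod_mul (B : ℕ → M) {h : ℕ} (hh : 0 < h) :
    descProd B h = ((List.range (h - 1)).map fun s => B (h - s)).prod * B 1 := by
  obtain ⟨m, rfl⟩ := Nat.exists_eq_add_of_lt hh
  simp [descProd, List.range_succ]

end DescendingProduct

section Normalization

variable {ι K : Type*} [Fintype ι] [Field K]

def normalizeBy (z v : ι → K) : ι → K := (z ⬝ᵥ v)⁻¹ • v

theorem dotProduct_normalizeBy {z v : ι → K} (hv : z ⬝ᵥ v ≠ 0) : z ⬝ᵥ normalizeBy z v = 1 := by
  rw [normalizeBy, dotProduct_smul, smul_eq_mul, inv_mul_cancel₀ hv]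

theorem exists_eq_smul_descProd_mulVec [DecidableEq ι] {B : ℕ → Matrix ι ι K} {q : ℕ → ι → K}
    {x z : ι → K} {h : ℕ} (hq1 : q 1 = x)
    (hrec : ∀ s, 1 ≤ s → s ≤ h → q (s + 1) = normalizeBy z (B s *ᵥ q s)) :
    ∀ s ≤ h, ∃ c : K, q (s + 1) = c • descProd B s *ᵥ x
  | 0, _ => ⟨1, by rw [hq1, descProd_zero, one_mulVec, one_smul]⟩
  | s + 1, hs => by
    obtain ⟨c, hc⟩ := exists_eq_smul_descProd_mulVec hq1 hrec s (by omega)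
    refine ⟨(z ⬝ᵥ B (s + 1) *ᵥ q (s + 1))⁻¹ * c, ?_⟩
    rw [hrec (s + 1) (by omega) hs, normalizeBy, hc, descProd_succ, ← mulVec_mulVec, mulVec_smul,
      smul_smul]

theorem eq_normalizeBy_of_dotProduct_eq_one {z v w : ι → K} {c : K} (hw : w = c • v)
    (hzw : z ⬝ᵥ w = 1) : z ⬝ᵥ v ≠ 0 ∧ w = normalizeBy z v := by
  rw [hw, dotProduct_smul, smul_eq_mul] at hzw
  refine ⟨right_ne_zero_of_mul_eq_one hzw, ?_⟩
  rw [hw, normalizeBy, eq_inv_of_mul_eq_one_left hzw]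

theorem eq_normalizeBy_descProd_mulVec [DecidableEq ι] {B : ℕ → Matrix ι ι K} {q : ℕ → ι → K}
    {x z : ι → K} {h : ℕ} (hh : 0 < h) (hq1 : q 1 = x)
    (hrec : ∀ s, 1 ≤ s → s ≤ h → q (s + 1) = normalizeBy z (B s *ᵥ q s))
    (hnz : z ⬝ᵥ B h *ᵥ q h ≠ 0) :
    z ⬝ᵥ descProd B h *ᵥ x ≠ 0 ∧ q (h + 1) = normalizeBy z (descProd B h *ᵥ x) := by
  obtain ⟨c, hc⟩ := exists_eq_smul_descProd_mulVec hq1 hrec h le_rfl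
  refine eq_normalizeBy_of_dotProduct_eq_one hc ?_
  rw [hrec h hh le_rfl, dotProduct_normalizeBy hnz]

end Normalization

section Loss

variable {ι : Type*} [Fintype ι]

noncomputable def predictionLoss (y z v : ι → ℝ) : ℝ :=
  1 / 2 * ∑ k, (y k - normalizeBy z v k) ^ 2

theorem differentiableAt_predictionLoss (y : ι → ℝ) {z v : ι → ℝ} (hv : z ⬝ᵥ v ≠ 0) :
    DifferentiableAt ℝ (predictionLoss y z) v := by
  unfold predictionLoss normalizeBy
  simp only [dotProduct] at hv ⊢
  fun_prop (disch := assumption)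

variable {c : ℝ → ι → ℝ} {w : ι → ℝ} {t : ℝ}

theorem HasDerivAt.const_dotProduct (hc : HasDerivAt c w t) (z : ι → ℝ) :
    HasDerivAt (fun s => z ⬝ᵥ c s) (z ⬝ᵥ w) t :=
  HasDerivAt.fun_sum fun k _ => (hasDerivAt_pi.1 hc k).const_mul (z k)

theorem HasDerivAt.half_sum_sq_sub (hc : HasDerivAt c w t) (y : ι → ℝ) :
    HasDerivAt (fun s => 1 / 2 * ∑ k, (y k - c s k) ^ 2) (-((y - c t) ⬝ᵥ w)) t := by
  refine ((HasDerivAt.fun_sum fun k _ =>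
    (((hasDerivAt_pi.1 hc k).const_sub (y k)).fun_pow 2)).const_mul (1 / 2)).congr_deriv ?_
  simp only [dotProduct, Finset.mul_sum, ← Finset.sum_neg_distrib, Pi.sub_apply]
  refine Finset.sum_congr rfl fun k _ => ?_
  ring

theorem hasDerivAt_normalizeBy (hc : HasDerivAt c w t) {z : ι → ℝ} (hz : z ⬝ᵥ c t ≠ 0) :
    HasDerivAt (fun s => normalizeBy z (c s))
      ((z ⬝ᵥ c t)⁻¹ • (w - (z ⬝ᵥ w) • normalizeBy z (c t))) t := by
  refine (((hc.const_dotProduct z).fun_inv hz).fun_smul hc).congr_deriv ?_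
  rw [normalizeBy]
  module

theorem hasDerivAt_predictionLoss [DecidableEq ι] (hc : HasDerivAt c w t) (y : ι → ℝ)
    {z : ι → ℝ} (hz : z ⬝ᵥ c t ≠ 0) :
    HasDerivAt (fun s => predictionLoss y z (c s))
      ((((z ⬝ᵥ c t)⁻¹ • (vecMulVec z (normalizeBy z (c t)) - 1)) *ᵥ
        (y - normalizeBy z (c t))) ⬝ᵥ w) t := by
  refine ((hasDerivAt_normalizeBy hc hz).half_sum_sq_sub y).congr_deriv ?_
  set q := normalizeBy z (c t)
  simp only [sub_mulVec, smul_mulVec, vecMulVec_mulVec, one_mulVec, op_smul_eq_smul,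
    smul_dotProduct, sub_dotProduct, dotProduct_smul, dotProduct_sub, smul_eq_mul]
  rw [dotProduct_comm z w, dotProduct_comm q y]
  ring

end Loss

theorem vecMulVec_transpose_mulVec_apply {m ι κ R : Type*} [Fintype m] [Fintype ι] [Fintype κ]
    [DecidableEq ι] [DecidableEq κ] [CommSemiring R]
    (C : Matrix m ι R) (u : m → R) (x : κ → R) (i : ι) (j : κ) :
    vecMulVec (Cᵀ *ᵥ u) x i j = u ⬝ᵥ (C * single i j (1 : R)) *ᵥ x := by
  rw [vecMulVec_apply, ← mulVec_mulVec, dotProduct_mulVec, ← mulVec_transpose, single_mulVec,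
    ← Pi.single, dotProduct_single, one_mul]

noncomputable def mulMulVecCLM {m ι κ : Type*} [Fintype ι] [Fintype κ]
    (C : Matrix m ι ℝ) (x : κ → ℝ) : Matrix ι κ ℝ →L[ℝ] m → ℝ :=
  LinearMap.toContinuousLinearMap
    { toFun A := (C * A) *ᵥ x
      map_add' A A' := by rw [Matrix.mul_add, add_mulVec]
      map_smul' r A := by rw [Matrix.mul_smul, smul_mulVec, RingHom.id_apply] }

theorem mulMulVecCLM_apply {m ι κ : Type*} [Fintype ι] [Fintype κ]
    (C : Matrix m ι ℝ) (x : κ → ℝ) (A : Matrix ι κ ℝ) : mulMulVecCLM C x A = (C * A) *ᵥ x := rfl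

theorem h_step_inference_gradient_general (n h : ℕ) (hh : 0 < h)
    (x z y : Fin n → ℝ)
    (B : ℕ → Matrix (Fin n) (Fin n) ℝ)
    (q : ℕ → Fin n → ℝ) (hq1 : q 1 = x)
    (hrec : ∀ s, 1 ≤ s → s ≤ h →
      q (s + 1) = (z ⬝ᵥ (B s).mulVec (q s))⁻¹ • (B s).mulVec (q s))
    (hnz : ∀ s, 1 ≤ s → s ≤ h → z ⬝ᵥ (B s).mulVec (q s) ≠ 0)
    (C : Matrix (Fin n) (Fin n) ℝ)
    (hC : C = ((List.range (h - 1)).map (fun s => B (h - s))).prod)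
    (G : Matrix (Fin n) (Fin n) ℝ)
    (hG : G = vecMulVec
      ((Cᵀ * ((z ⬝ᵥ (C * B 1).mulVec x)⁻¹ •
        (vecMulVec z (q (h + 1)) - 1))).mulVec (y - q (h + 1))) x) :
    z ⬝ᵥ (C * B 1).mulVec x ≠ 0 ∧
    q (h + 1) = (z ⬝ᵥ (C * B 1).mulVec x)⁻¹ • (C * B 1).mulVec x ∧
    DifferentiableAt ℝ
      (fun M : Matrix (Fin n) (Fin n) ℝ =>
        (1 / 2) * ∑ k, (y k -
          ((z ⬝ᵥ (C * M).mulVec x)⁻¹ • (C * M).mulVec x) k) ^ 2) (B 1) ∧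
    (∀ i j, HasDerivAt
      (fun t : ℝ =>
        (1 / 2) * ∑ k, (y k -
          ((z ⬝ᵥ (C * (B 1 + t • Matrix.single i j (1 : ℝ))).mulVec x)⁻¹ •
            (C * (B 1 + t • Matrix.single i j (1 : ℝ))).mulVec x) k) ^ 2)
      (G i j) 0) := by
  obtain ⟨ha, hq⟩ := eq_normalizeBy_descProd_mulVec hh hq1 hrec (hnz h hh le_rfl)
  rw [descProd_eq_prod_mul B hh, ← hC] at ha hq
  have hdiff : DifferentiableAt ℝ (predictionLoss y z ∘ mulMulVecCLM C x) (B 1) :=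
    (differentiableAt_predictionLoss y ha).comp (B 1) (mulMulVecCLM C x).differentiableAt
  refine ⟨ha, hq, hdiff, fun i j => ?_⟩
  have hline : HasDerivAt (fun t : ℝ => B 1 + t • single i j (1 : ℝ)) (single i j 1) 0 :=
    ((hasDerivAt_id' 0).smul_const _).const_add _ |>.congr_deriv (one_smul _ _)
  have hstart : mulMulVecCLM C x (B 1 + (0 : ℝ) • single i j 1) = (C * B 1) *ᵥ x := by
    rw [zero_smul, add_zero, mulMulVecCLM_apply]
  have hloss := hasDerivAt_predictionLoss ((mulMulVecCLM C x).hasFDerivAt.comp_hasDerivAt 0 hline)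
    y (by rwa [Function.comp_apply, hstart])
  rw [Function.comp_apply, hstart, ← hq] at hloss
  rw [hG, ← mulVec_mulVec, vecMulVec_transpose_mulVec_apply]
  exact hloss

/-- Lemma 2 (h-step inference gradient): with states produced by the
normalized PSR updates with operators `B 1, …, B h`, and `C = B h ⋯ B 2`
(with `C = I` when `h = 1`), the loss `g(A) = (1/2) ‖y − (CAx)/(zᵀCAx)‖²`
is well defined near `A = B 1` (i.e. `zᵀ C B₁ x ≠ 0`), is differentiable
there, and its gradient matrix at `B 1` equals
`Cᵀ ((z q̂_{h+1}ᵀ − I)/(zᵀ C B₁ x)) (y − q̂_{h+1}) xᵀ` where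
`q̂_{h+1} = (C B₁ x)/(zᵀ C B₁ x)`. -/
theorem h_step_inference_gradient (n h : ℕ) (hn : 0 < n) (hh : 0 < h)
    (x z y : Fin n → ℝ)
    (B : ℕ → Matrix (Fin n) (Fin n) ℝ)
    (q : ℕ → Fin n → ℝ) (hq1 : q 1 = x)
    (hrec : ∀ s, 1 ≤ s → s ≤ h →
      q (s + 1) = (z ⬝ᵥ (B s).mulVec (q s))⁻¹ • (B s).mulVec (q s))
    (hnz : ∀ s, 1 ≤ s → s ≤ h → z ⬝ᵥ (B s).mulVec (q s) ≠ 0)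
    (C : Matrix (Fin n) (Fin n) ℝ)
    (hC : C = ((List.range (h - 1)).map (fun s => B (h - s))).prod)
    (G : Matrix (Fin n) (Fin n) ℝ)
    (hG : G = vecMulVec
      ((Cᵀ * ((z ⬝ᵥ (C * B 1).mulVec x)⁻¹ •
        (vecMulVec z (q (h + 1)) - 1))).mulVec (y - q (h + 1))) x) :
    z ⬝ᵥ (C * B 1).mulVec x ≠ 0 ∧
    q (h + 1) = (z ⬝ᵥ (C * B 1).mulVec x)⁻¹ • (C * B 1).mulVec x ∧
    DifferentiableAt ℝ
      (fun M : Matrix (Fin n) (Fin n) ℝ =>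
        (1 / 2) * ∑ k, (y k -
          ((z ⬝ᵥ (C * M).mulVec x)⁻¹ • (C * M).mulVec x) k) ^ 2) (B 1) ∧
    (∀ i j, HasDerivAt
      (fun t : ℝ =>
        (1 / 2) * ∑ k, (y k -
          ((z ⬝ᵥ (C * (B 1 + t • Matrix.single i j (1 : ℝ))).mulVec x)⁻¹ •
            (C * (B 1 + t • Matrix.single i j (1 : ℝ))).mulVec x) k) ^ 2)
      (G i j) 0) :=
  h_step_inference_gradient_general n h hh x z y B q hq1 hrec hnz C hC G hG
end
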